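/- arXiv:2510.03373 — 2 statements merged into one kernel-verified Lean document; each statement's English description precedes it below -/
import Mathlib

section
/- The set of numbers whose modified Engel expansion digits have divergent harmonic series has Hausdorff dimension 0; that is, dim_H { E'(c) : c = (c_n)_{n≥1} a strictly increasing sequence of integers with c₁ ≥ 2 and ∑_{n=1}^{∞} 1/c_n = ∞ } = 0. -/
open Filter

noncomputable section

/-- The classical Engel series `E(c) = ∑_{n≥1} 1/(c₁c₂⋯c_n)` (0-based: `c 0 = c₁`). -/
def engel (c : ℕ → ℕ) : ℝ :=
  ∑' n : ℕ, 1 / ∏ i ∈ Finset.range (n + 1), (c i : ℝ)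

/-- The modified Engel series
`E'(c) = 1/c₁ + ∑_{n≥1} 1/((c₁−1)(c₂−1)⋯(c_n−1)·c_{n+1})` (0-based: `c 0 = c₁`). -/
def modEngel (c : ℕ → ℕ) : ℝ :=
  1 / (c 0 : ℝ) +
    ∑' n : ℕ, 1 / ((∏ i ∈ Finset.range (n + 1), ((c i : ℝ) - 1)) * (c (n + 1) : ℝ))

/-- The digit shift `σ(c)_n = c_n + n − 1` (0-based: `σ(c) (n-1) = c (n-1) + (n-1)`). -/
def engelShift (c : ℕ → ℕ) : ℕ → ℕ := fun n => c n + n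

/-- The Pierce series in Perron notation
`Π(c) = ∑_{n≥0} (−1)^n/((c₁−1)⋯(c_n−1)(c_{n+1}−1))` (0-based: `c 0 = c₁`). -/
def pierce (c : ℕ → ℕ) : ℝ :=
  ∑' n : ℕ, (-1 : ℝ) ^ n / ((∏ i ∈ Finset.range n, ((c i : ℝ) - 1)) * ((c n : ℝ) - 1))

/-- The traditional Pierce series `Π̃(d) = ∑_{n≥1} (−1)^{n+1}/(d₁d₂⋯d_n)` (0-based: `d 0 = d₁`). -/
def pierceTrad (d : ℕ → ℕ) : ℝ :=
  ∑' n : ℕ, (-1 : ℝ) ^ n / ∏ i ∈ Finset.range (n + 1), (d i : ℝ)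

end

/-!
If `∑ 1/cₙ` diverges then, for every `s > 1`, infinitely often `cₙ ≤ (n+1)^s`. So `E'(c)` lies in
infinitely many cylinders `{E'(c') : c' agrees with c up to n}` whose last digit is at most
`(n+1)^s`. Such a cylinder has length at most `1/((c₁-1)⋯(c_{n+1}-1)) ≤ 1/(n+1)!`, and there are at
most `binom(⌊(n+1)^s⌋+1, n+1) ≤ (2(n+1)^s)^(n+1)/(n+1)!` of them. For `d > 0` and `s < 1 + d`, the
sum of the `d`-th powers of their lengths converges, so the Hausdorff–Cantelli lemma gives
`μH[d] = 0`.
-/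

open Finset MeasureTheory ENNReal Topology Metric
open scoped Nat

theorem hausdorffMeasure_limsup_cofinite_eq_zero {X ι : Type*} [EMetricSpace X] [MeasurableSpace X]
    [BorelSpace X] [Countable ι] {d : ℝ} (hd : 0 < d) {U : ι → Set X}
    (hU : ∑' i, ediam (U i) ^ d ≠ ∞) : μH[d] (limsup U cofinite) = 0 := by
  set T : Finset ι → ℝ≥0∞ := fun F => ∑' i : {i // i ∉ F}, ediam (U i) ^ d
  have hT : Tendsto T atTop (𝓝 0) := ENNReal.tendsto_tsum_compl_atTop_zero hU
  have hdiam : ∀ F, ∀ i : {i // i ∉ F}, ediam (U i) ≤ T F ^ d⁻¹ := fun F i =>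
    (ENNReal.le_rpow_inv_iff hd).2
      (ENNReal.le_tsum (f := fun i : {i // i ∉ F} => ediam (U i) ^ d) i)
  have hcover : ∀ F : Finset ι, limsup U cofinite ⊆ ⋃ i : {i // i ∉ F}, U i := by
    intro F x hx
    rw [mem_limsup_iff_frequently_mem, frequently_cofinite_iff_infinite] at hx
    obtain ⟨i, hi, hiF⟩ := hx.exists_notMem_finset F
    exact Set.mem_iUnion.2 ⟨⟨i, hiF⟩, hi⟩
  have hr : Tendsto (fun F => T F ^ d⁻¹) atTop (𝓝 0) := by
    have := ((ENNReal.continuous_rpow_const (y := d⁻¹)).tendsto 0).comp hT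
    rwa [ENNReal.zero_rpow_of_pos (inv_pos.2 hd)] at this
  have := Measure.hausdorffMeasure_le_liminf_tsum d (limsup U cofinite) _ hr
    (ι := fun F => {i // i ∉ F}) (fun F i => U i) (.of_forall hdiam) (.of_forall hcover)
  rwa [hT.liminf_eq, nonpos_iff_eq_zero] at this

open scoped Classical in
theorem card_filter_strictMono_piFinset_range_le (k m : ℕ) :
    #((Fintype.piFinset fun _ : Fin k => range m).filter StrictMono) ≤ m.choose k := by
  refine (card_le_card_of_injOn (t := powersetCard k (range m)) (fun t => univ.image t)
    (fun t ht => ?_) fun t ht u hu htu => ?_).trans (by rw [card_powersetCard, card_range])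
  · simp only [coe_filter, Fintype.mem_piFinset, mem_range, Set.mem_ofPred_eq] at ht
    rw [mem_coe, mem_powersetCard, card_image_of_injective _ ht.2.injective, card_univ,
      Fintype.card_fin]
    exact ⟨fun x hx => by obtain ⟨i, -, rfl⟩ := mem_image.1 hx; exact mem_range.2 (ht.1 i), rfl⟩
  · simp only [coe_filter, Set.mem_ofPred_eq] at ht hu
    refine (ht.2.range_inj hu.2).1 ?_
    simpa using congrArg ((↑) : Finset ℕ → Set ℕ) htu

theorem pow_div_exp_le_factorial (n : ℕ) : ((n : ℝ) / Real.exp 1) ^ n ≤ n ! := by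
  have := Real.pow_div_factorial_le_exp _ (Nat.cast_nonneg n) n
  rw [div_le_iff₀ (by positivity)] at this
  rw [div_pow, Real.exp_one_pow, div_le_iff₀ (Real.exp_pos _)]
  linarith

theorem choose_floor_rpow_mul_inv_factorial_rpow_le {s d : ℝ} (hs : 0 ≤ s) (hd : 0 ≤ 1 + d)
    {k : ℕ} (hk : 1 ≤ k) :
    ((⌊(k : ℝ) ^ s⌋₊ + 1).choose k : ℝ) * ((k ! : ℝ)⁻¹) ^ d ≤
      (2 * Real.exp (1 + d) * (k : ℝ) ^ (s - (1 + d))) ^ k := by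
  have hK : (1 : ℝ) ≤ k := by exact_mod_cast hk
  set K : ℝ := (k : ℝ)
  have hF : 0 < (k ! : ℝ) := by positivity
  have hm : ((⌊K ^ s⌋₊ + 1 : ℕ) : ℝ) ≤ 2 * K ^ s := by
    have := Nat.floor_le (by positivity : 0 ≤ K ^ s)
    have := Real.one_le_rpow hK hs
    push_cast
    linarith
  have hchoose : ((⌊K ^ s⌋₊ + 1).choose k : ℝ) ≤ (2 * K ^ s) ^ k / k ! :=
    (Nat.choose_le_pow_div k _).trans (by gcongr)
  have hfact : ((K / Real.exp 1) ^ (1 + d)) ^ k ≤ (k ! : ℝ) ^ (1 + d) := by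
    rw [← Real.rpow_natCast, ← Real.rpow_mul (by positivity), mul_comm,
      Real.rpow_mul (by positivity), Real.rpow_natCast]
    exact Real.rpow_le_rpow (by positivity) (pow_div_exp_le_factorial k) hd
  have hbase :
      2 * Real.exp (1 + d) * K ^ (s - (1 + d)) = 2 * K ^ s / (K / Real.exp 1) ^ (1 + d) := by
    rw [Real.div_rpow (by positivity) (Real.exp_pos 1).le, Real.exp_one_rpow,
      Real.rpow_sub (by positivity)]
    field_simp
  calc ((⌊K ^ s⌋₊ + 1).choose k : ℝ) * ((k ! : ℝ)⁻¹) ^ d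
      ≤ (2 * K ^ s) ^ k / k ! * ((k ! : ℝ)⁻¹) ^ d := by gcongr
    _ = (2 * K ^ s) ^ k / (k ! : ℝ) ^ (1 + d) := by
        rw [Real.inv_rpow hF.le, Real.rpow_add hF, Real.rpow_one]
        field_simp
    _ ≤ (2 * K ^ s) ^ k / ((K / Real.exp 1) ^ (1 + d)) ^ k := by gcongr
    _ = _ := by rw [hbase, div_pow]

theorem summable_choose_floor_rpow_mul_inv_factorial_rpow {s d : ℝ} (hs : 0 ≤ s) (hsd : s < 1 + d) :
    Summable fun n : ℕ =>
      ((⌊((n + 1 : ℕ) : ℝ) ^ s⌋₊ + 1).choose (n + 1) : ℝ) * (((n + 1)! : ℝ)⁻¹) ^ d := by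
  have hbase : Tendsto (fun n : ℕ => 2 * Real.exp (1 + d) * ((n + 1 : ℕ) : ℝ) ^ (s - (1 + d)))
      atTop (𝓝 0) := by
    have := ((tendsto_rpow_neg_atTop (by linarith : 0 < 1 + d - s)).comp
      (tendsto_natCast_atTop_atTop.comp (tendsto_add_atTop_nat 1))).const_mul (2 * Real.exp (1 + d))
    simpa using this
  refine summable_geometric_two.of_norm_bounded_eventually_nat ?_
  filter_upwards [hbase.eventually (ge_mem_nhds (by norm_num : (0 : ℝ) < 1 / 2))] with n hn
  rw [Real.norm_of_nonneg (by positivity)]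
  refine (choose_floor_rpow_mul_inv_factorial_rpow_le hs (by linarith) n.succ_pos).trans ?_
  calc _ ≤ (1 / 2 : ℝ) ^ (n + 1) := pow_le_pow_left₀ (by positivity) hn _
    _ ≤ (1 / 2) ^ n := pow_le_pow_of_le_one (by norm_num) (by norm_num) n.le_succ

theorem frequently_le_rpow_of_not_summable_one_div {a : ℕ → ℝ} {s : ℝ} (hs : 1 < s)
    (h : ¬ Summable fun n => 1 / a n) : ∃ᶠ n in atTop, a n ≤ ((n + 1 : ℕ) : ℝ) ^ s := by
  contrapose! h
  have hsum : Summable fun n : ℕ => 1 / ((n + 1 : ℕ) : ℝ) ^ s := by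
    refine ((Real.summable_one_div_nat_add_rpow 1 s).2 hs).congr fun n => ?_
    rw [abs_of_nonneg (by positivity), Nat.cast_succ]
  refine hsum.of_norm_bounded_eventually_nat ?_
  filter_upwards [h] with n hn
  have hpos : 0 < ((n + 1 : ℕ) : ℝ) ^ s := by positivity
  rw [Real.norm_of_nonneg (one_div_nonneg.2 (hpos.trans hn).le)]
  exact one_div_le_one_div_of_le hpos hn.le

namespace ModEngel

noncomputable def digitProd (c : ℕ → ℕ) (n : ℕ) : ℝ := ∏ i ∈ range (n + 1), ((c i : ℝ) - 1)

noncomputable def term (c : ℕ → ℕ) (n : ℕ) : ℝ := 1 / (digitProd c n * c (n + 1))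

noncomputable def partialSum (c : ℕ → ℕ) (n : ℕ) : ℝ := 1 / (c 0 : ℝ) + ∑ k ∈ range n, term c k

theorem modEngel_eq_tsum (c : ℕ → ℕ) : modEngel c = 1 / (c 0 : ℝ) + ∑' n, term c n := rfl

theorem digitProd_succ (c : ℕ → ℕ) (n : ℕ) :
    digitProd c (n + 1) = digitProd c n * ((c (n + 1) : ℝ) - 1) :=
  prod_range_succ _ _

variable {c : ℕ → ℕ}

theorem add_two_le (hc : StrictMono c) (h0 : 2 ≤ c 0) (i : ℕ) : i + 2 ≤ c i := by
  have := hc.add_le_nat i 0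
  simp only [add_zero] at this
  omega

theorem factorial_le_digitProd (hc : ∀ i, i + 2 ≤ c i) (n : ℕ) :
    ((n + 1)! : ℝ) ≤ digitProd c n := by
  rw [← prod_range_add_one_eq_factorial, Nat.cast_prod]
  refine prod_le_prod (fun i _ => by positivity) fun i _ => ?_
  have : ((i + 2 : ℕ) : ℝ) ≤ c i := by exact_mod_cast hc i
  push_cast at this ⊢
  linarith

theorem digitProd_pos (hc : ∀ i, i + 2 ≤ c i) (n : ℕ) : 0 < digitProd c n :=
  (Nat.cast_pos.2 (Nat.factorial_pos _)).trans_le (factorial_le_digitProd hc n)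

theorem term_nonneg (hc : ∀ i, i + 2 ≤ c i) (n : ℕ) : 0 ≤ term c n := by
  have := digitProd_pos hc n
  unfold term; positivity

-- `1 / m ≤ (m - 2) / (m - 1)` for `m ≥ 3` makes the series telescope against `1 / digitProd`.
theorem term_le_inv_sub_inv (hc : ∀ i, i + 2 ≤ c i) (n : ℕ) :
    term c n ≤ (digitProd c n)⁻¹ - (digitProd c (n + 1))⁻¹ := by
  have hP := digitProd_pos hc n
  have hm : (3 : ℝ) ≤ c (n + 1) := by exact_mod_cast (hc (n + 1)).trans' (by omega)
  have hm1 : (0 : ℝ) < c (n + 1) - 1 := by linarith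
  have hrhs : (digitProd c n)⁻¹ - (digitProd c n * ((c (n + 1) : ℝ) - 1))⁻¹ =
      ((c (n + 1) : ℝ) - 2) / (digitProd c n * ((c (n + 1) : ℝ) - 1)) := by
    field_simp
    ring
  rw [term, digitProd_succ, hrhs, div_le_div_iff₀ (by positivity) (by positivity)]
  nlinarith [mul_nonneg hP.le (mul_nonneg (sub_nonneg.2 hm) (by linarith : (0 : ℝ) ≤ c (n + 1)))]

theorem sum_range_term_le_inv_sub_inv (hc : ∀ i, i + 2 ≤ c i) (n m : ℕ) :
    ∑ k ∈ range m, term c (n + k) ≤ (digitProd c n)⁻¹ - (digitProd c (n + m))⁻¹ := by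
  induction m with
  | zero => simp
  | succ m ih =>
    rw [sum_range_succ, ← add_assoc]
    linarith [term_le_inv_sub_inv hc (n + m)]

theorem modEngel_mem_Icc (hc : ∀ i, i + 2 ≤ c i) (n : ℕ) :
    modEngel c ∈ Set.Icc (partialSum c n) (partialSum c n + (digitProd c n)⁻¹) := by
  have hbound : ∀ n m, ∑ k ∈ range m, term c (n + k) ≤ (digitProd c n)⁻¹ := fun n m =>
    (sum_range_term_le_inv_sub_inv hc n m).trans
      (sub_le_self _ (inv_nonneg.2 (digitProd_pos hc _).le))
  have hsum : Summable (term c) :=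
    summable_of_sum_range_le (term_nonneg hc) (by simpa using hbound 0)
  have htail : 0 ≤ ∑' k, term c (n + k) ∧ ∑' k, term c (n + k) ≤ (digitProd c n)⁻¹ :=
    ⟨tsum_nonneg fun k => term_nonneg hc _,
      Real.tsum_le_of_sum_range_le (fun k => term_nonneg hc _) (hbound n)⟩
  have hsplit : modEngel c = partialSum c n + ∑' k, term c (n + k) := by
    rw [modEngel_eq_tsum, partialSum, ← hsum.sum_add_tsum_nat_add n, add_assoc]
    simp only [add_comm n]
  rw [hsplit]
  constructor <;> linarith [htail.1, htail.2]

theorem digitProd_congr {c' : ℕ → ℕ} {n : ℕ} (h : ∀ i ≤ n, c i = c' i) :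
    digitProd c n = digitProd c' n :=
  prod_congr rfl fun i hi => by rw [h i (Nat.lt_succ_iff.1 (mem_range.1 hi))]

theorem partialSum_congr {c' : ℕ → ℕ} {n : ℕ} (h : ∀ i ≤ n, c i = c' i) :
    partialSum c n = partialSum c' n := by
  unfold partialSum
  refine congrArg₂ _ (by rw [h 0 n.zero_le]) (sum_congr rfl fun k hk => ?_)
  have hk := mem_range.1 hk
  rw [term, term, digitProd_congr fun i hi => h i (by omega), h (k + 1) hk]

theorem dist_modEngel_le {c' : ℕ → ℕ} (hc : ∀ i, i + 2 ≤ c i) (hc' : ∀ i, i + 2 ≤ c' i) {n : ℕ}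
    (h : ∀ i ≤ n, c i = c' i) : dist (modEngel c) (modEngel c') ≤ ((n + 1)! : ℝ)⁻¹ := by
  have h' := modEngel_mem_Icc hc' n
  rw [← partialSum_congr h, ← digitProd_congr h] at h'
  calc dist (modEngel c) (modEngel c') ≤ (digitProd c n)⁻¹ := by
        simpa using Real.dist_le_of_mem_Icc (modEngel_mem_Icc hc n) h'
    _ ≤ ((n + 1)! : ℝ)⁻¹ := inv_anti₀ (by positivity) (factorial_le_digitProd hc n)

def cylinder (M : ℕ → ℕ) (p : Σ n, Fin (n + 1) → ℕ) : Set ℝ :=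
  modEngel '' {c | StrictMono c ∧ 2 ≤ c 0 ∧ c p.1 ≤ M p.1 ∧ ∀ i : Fin (p.1 + 1), c i = p.2 i}

theorem ediam_cylinder_le (M : ℕ → ℕ) (n : ℕ) (t : Fin (n + 1) → ℕ) :
    ediam (cylinder M ⟨n, t⟩) ≤ ENNReal.ofReal ((n + 1)! : ℝ)⁻¹ := by
  refine ediam_le_of_forall_dist_le ?_
  rintro _ ⟨c, ⟨hc, h0, -, hct⟩, rfl⟩ _ ⟨c', ⟨hc', h0', -, hct'⟩, rfl⟩
  exact dist_modEngel_le (add_two_le hc h0) (add_two_le hc' h0') fun i hi =>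
    (hct ⟨i, Nat.lt_succ_of_le hi⟩).trans (hct' ⟨i, Nat.lt_succ_of_le hi⟩).symm

theorem strictMono_and_le_of_nonempty_cylinder {M : ℕ → ℕ} {n : ℕ} {t : Fin (n + 1) → ℕ}
    (h : (cylinder M ⟨n, t⟩).Nonempty) : StrictMono t ∧ ∀ i, t i ≤ M n := by
  obtain ⟨_, c, ⟨hc, -, hcn, hct⟩, -⟩ := h
  obtain rfl : t = fun i : Fin (n + 1) => c i := funext fun i => (hct i).symm
  exact ⟨hc.comp Fin.val_strictMono, fun i => (hc.monotone (Nat.lt_succ_iff.1 i.2)).trans hcn⟩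

theorem mem_limsup_cylinder {M : ℕ → ℕ} (hc : StrictMono c) (h0 : 2 ≤ c 0)
    (hM : ∃ᶠ n in atTop, c n ≤ M n) : modEngel c ∈ limsup (cylinder M) cofinite := by
  rw [mem_limsup_iff_frequently_mem, frequently_cofinite_iff_infinite]
  refine ((Nat.frequently_atTop_iff_infinite.1 hM).image
    (f := fun n => (⟨n, fun i => c i⟩ : Σ n, Fin (n + 1) → ℕ))
    fun m _ n _ h => congrArg Sigma.fst h).mono ?_
  rintro _ ⟨n, hn, rfl⟩
  exact ⟨c, ⟨hc, h0, hn, fun i => rfl⟩, rfl⟩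

theorem tsum_ediam_cylinder_rpow_le {d : ℝ} (hd : 0 < d) (M : ℕ → ℕ) (n : ℕ) :
    ∑' t, ediam (cylinder M ⟨n, t⟩) ^ d ≤
      ENNReal.ofReal (((M n + 1).choose (n + 1) : ℝ) * (((n + 1)! : ℝ)⁻¹) ^ d) := by
  classical
  set A := (Fintype.piFinset fun _ : Fin (n + 1) => range (M n + 1)).filter StrictMono
  have hsupp : ∀ t ∉ A, ediam (cylinder M ⟨n, t⟩) ^ d = 0 := by
    intro t ht
    have hempty : cylinder M ⟨n, t⟩ = ∅ := Set.not_nonempty_iff_eq_empty.1 fun hne => ht <| by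
      obtain ⟨hmono, hle⟩ := strictMono_and_le_of_nonempty_cylinder hne
      simpa [A, Fintype.mem_piFinset, Nat.lt_succ_iff] using ⟨hle, hmono⟩
    rw [hempty, ediam_empty, zero_rpow_of_pos hd]
  rw [tsum_eq_sum hsupp, ENNReal.ofReal_mul (by positivity), ofReal_natCast,
    ← ofReal_rpow_of_nonneg (by positivity) hd.le]
  calc ∑ t ∈ A, ediam (cylinder M ⟨n, t⟩) ^ d
      ≤ ∑ t ∈ A, ENNReal.ofReal ((n + 1)! : ℝ)⁻¹ ^ d :=
        sum_le_sum fun t _ => rpow_le_rpow (ediam_cylinder_le M n t) hd.le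
    _ = #A * ENNReal.ofReal ((n + 1)! : ℝ)⁻¹ ^ d := by rw [sum_const, nsmul_eq_mul]
    _ ≤ _ := by gcongr; exact_mod_cast card_filter_strictMono_piFinset_range_le _ _

theorem hausdorffMeasure_modEngel_not_summable_eq_zero {d : ℝ} (hd : 0 < d) :
    μH[d] {x : ℝ | ∃ c : ℕ → ℕ, StrictMono c ∧ 2 ≤ c 0 ∧
        ¬ Summable (fun n : ℕ => 1 / (c n : ℝ)) ∧ x = modEngel c} = 0 := by
  obtain ⟨s, hs, hsd⟩ : ∃ s, 1 < s ∧ s < 1 + d := ⟨1 + d / 2, by linarith, by linarith⟩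
  set M : ℕ → ℕ := fun n => ⌊((n + 1 : ℕ) : ℝ) ^ s⌋₊
  refine measure_mono_null ?_ (hausdorffMeasure_limsup_cofinite_eq_zero hd (U := cylinder M) ?_)
  · rintro _ ⟨c, hc, h0, hdiv, rfl⟩
    exact mem_limsup_cylinder hc h0 <|
      (frequently_le_rpow_of_not_summable_one_div hs hdiv).mono fun n hn => Nat.le_floor hn
  · rw [ENNReal.tsum_sigma']
    refine ne_top_of_le_ne_top ?_ (ENNReal.tsum_le_tsum fun n => tsum_ediam_cylinder_rpow_le hd M n)
    rw [← ENNReal.ofReal_tsum_of_nonneg (fun n => by positivity)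
      (summable_choose_floor_rpow_mul_inv_factorial_rpow (by linarith) hsd)]
    exact ofReal_ne_top

end ModEngel

/-- The set of numbers whose modified Engel digits have divergent harmonic
series has Hausdorff dimension `0`. -/
theorem dimH_modEngel_divergent_harmonic :
    dimH {x : ℝ | ∃ c : ℕ → ℕ, StrictMono c ∧ 2 ≤ c 0 ∧
        ¬ Summable (fun n : ℕ => 1 / (c n : ℝ)) ∧ x = modEngel c} = 0 := by
  refine le_antisymm (dimH_le fun d hd => ?_) zero_le
  rcases eq_zero_or_pos d with rfl | hpos
  · simp
  rw [ModEngel.hausdorffMeasure_modEngel_not_summable_eq_zero (by exact_mod_cast hpos)] at hd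
  exact absurd hd zero_ne_top
end

section
/- Let P be a Perron system and (c₁,…,c_k) a P-admissible word, and let U = (x₁, x₂] where x₁ = S_k (the infimum of the P-cylinder Δ^P_{c₁…c_k}) and x₁ < x₂ ≤ S_k + D_k (the supremum of Δ^P_{c₁…c_k}). Then U can be covered by at most two sets from 𝔓, each of diameter at most x₂ − x₁, and U can also be covered by a single set from 𝔓 of diameter at most 2(x₂ − x₁). -/
open Set Filter MeasureTheory
open scoped ENNReal

noncomputable section

/-- A Perron system `P = (φ_n)`: `φ₀ = φ []` and `φ_n(c₁,…,c_n) = φ [c₁,…,c_n]`;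
all values are positive integers. -/
structure PerronSystem where
  φ : List ℕ → ℕ
  φ_pos : ∀ l, 0 < φ l

/-- `(c₁−1)c₁⋯(c_n−1)c_n` (0-based indexing: `c 0 = c₁`). -/
def qprod (c : ℕ → ℕ) (n : ℕ) : ℝ :=
  ∏ i ∈ Finset.range n, (((c i : ℝ) - 1) * (c i : ℝ))

namespace PerronSystem

variable (P : PerronSystem)

/-- `r P c 0 = φ₀` and `r P c n = φ_n(c₁,…,c_n)`. -/
def r (c : ℕ → ℕ) (n : ℕ) : ℕ := P.φ (List.ofFn fun j : Fin n => c j)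

/-- The word `c₁ … c_k` is P-admissible: `c_i ≥ φ_{i−1}(c₁,…,c_{i−1}) + 1`. -/
def AdmissibleUpTo (c : ℕ → ℕ) (k : ℕ) : Prop := ∀ i < k, P.r c i + 1 ≤ c i

/-- The infinite digit sequence `c` is P-admissible. -/
def Admissible (c : ℕ → ℕ) : Prop := ∀ i, P.r c i + 1 ≤ c i

/-- `r₀ r₁ ⋯ r_{n−1}`. -/
def rprod (c : ℕ → ℕ) (n : ℕ) : ℝ := ∏ i ∈ Finset.range n, (P.r c i : ℝ)

/-- Diameter `D_k = r₀⋯r_{k−1} / ((c₁−1)c₁⋯(c_k−1)c_k)` of the cylinder with base `c₁…c_k`. -/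
def D (c : ℕ → ℕ) (k : ℕ) : ℝ := P.rprod c k / qprod c k

/-- `S_k`, the infimum of the positive Perron cylinder with base `c₁…c_k`. -/
def S (c : ℕ → ℕ) (k : ℕ) : ℝ :=
  ∑ n ∈ Finset.range k, P.rprod c (n + 1) / (qprod c n * (c n : ℝ))

/-- The positive Perron cylinder `Δ^P_{c₁…c_k} = (S_k, S_k + D_k]`. -/
def cyl (c : ℕ → ℕ) (k : ℕ) : Set ℝ := Ioc (P.S c k) (P.S c k + P.D c k)

/-- `A_k = ∑_{n=0}^{k−1} (−1)^n r₀⋯r_n / ((c₁−1)c₁⋯(c_n−1)c_n (c_{n+1}−1))`. -/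
def A (c : ℕ → ℕ) (k : ℕ) : ℝ :=
  ∑ n ∈ Finset.range k, (-1 : ℝ) ^ n * P.rprod c (n + 1) / (qprod c n * ((c n : ℝ) - 1))

/-- The second endpoint `A_k + (−1)^k D_k` of the interval `I_{c₁…c_k}`. -/
def altEnd (c : ℕ → ℕ) (k : ℕ) : ℝ := P.A c k + (-1 : ℝ) ^ k * P.D c k

/-- The countable set `IS^{P⁻}` of endpoints of the intervals `I_{c₁…c_k}`
(the word of length `0` contributes the endpoints `0` and `1`). -/
def IS : Set ℝ :=
  {x | ∃ (c : ℕ → ℕ) (k : ℕ), P.AdmissibleUpTo c k ∧ (x = P.A c k ∨ x = P.altEnd c k)}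

/-- The alternating Perron cylinder `Δ^{P⁻}_{c₁…c_k} = I_{c₁…c_k} \ IS^{P⁻}`. -/
def altCyl (c : ℕ → ℕ) (k : ℕ) : Set ℝ :=
  Ioo (min (P.A c k) (P.altEnd c k)) (max (P.A c k) (P.altEnd c k)) \ P.IS

/-- The family `𝔓` of all unions of consecutive positive Perron cylinders of the same
rank contained in a single cylinder of the previous rank. -/
def famP : Set (Set ℝ) :=
  {U | ∃ (c : ℕ → ℕ) (k n : ℕ), P.AdmissibleUpTo c k ∧ P.r c k + 1 ≤ n ∧
      ((∃ m, n ≤ m ∧ U = ⋃ i ∈ Finset.Icc n m, P.cyl (Function.update c k i) (k + 1)) ∨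
        U = ⋃ i ∈ {j : ℕ | n ≤ j}, P.cyl (Function.update c k i) (k + 1))}

/-- The subfamily `𝔓₁ ⊆ 𝔓` of finite unions. -/
def famP1 : Set (Set ℝ) :=
  {U | ∃ (c : ℕ → ℕ) (k n m : ℕ), P.AdmissibleUpTo c k ∧ P.r c k + 1 ≤ n ∧ n ≤ m ∧
      U = ⋃ i ∈ Finset.Icc n m, P.cyl (Function.update c k i) (k + 1)}

/-- The family `𝔓⁻` of all unions of consecutive alternating Perron cylinders of the same
rank contained in a single cylinder of the previous rank. -/
def famAlt : Set (Set ℝ) :=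
  {U | ∃ (c : ℕ → ℕ) (k n : ℕ), P.AdmissibleUpTo c k ∧ P.r c k + 1 ≤ n ∧
      ((∃ m, n ≤ m ∧ U = ⋃ i ∈ Finset.Icc n m, P.altCyl (Function.update c k i) (k + 1)) ∨
        U = ⋃ i ∈ {j : ℕ | n ≤ j}, P.altCyl (Function.update c k i) (k + 1))}

/-- The subfamily `𝔓₁⁻ ⊆ 𝔓⁻` of finite unions. -/
def famAlt1 : Set (Set ℝ) :=
  {U | ∃ (c : ℕ → ℕ) (k n m : ℕ), P.AdmissibleUpTo c k ∧ P.r c k + 1 ≤ n ∧ n ≤ m ∧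
      U = ⋃ i ∈ Finset.Icc n m, P.altCyl (Function.update c k i) (k + 1)}

/-- The value `Δ^P_c` of the positive Perron expansion with digit sequence `c`. -/
def posValue (c : ℕ → ℕ) : ℝ :=
  ∑' n : ℕ, P.rprod c (n + 1) / (qprod c n * (c n : ℝ))

/-- The value `Δ^{P⁻}_c` of the alternating Perron expansion with digit sequence `c`. -/
def altValue (c : ℕ → ℕ) : ℝ :=
  ∑' n : ℕ, (-1 : ℝ) ^ n * P.rprod c (n + 1) / (qprod c n * ((c n : ℝ) - 1))

end PerronSystem

/-- The Hausdorff `α`-dimensional measure of `E` with respect to a family of coverings `Φ`. -/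
def Hfam (Φ : Set (Set ℝ)) (α : ℝ) (E : Set ℝ) : ℝ≥0∞ :=
  ⨆ (ε : ℝ) (_ : 0 < ε),
    ⨅ (f : ℕ → Set ℝ) (_ : E ⊆ ⋃ n, f n) (_ : ∀ n, f n ∈ Φ)
      (_ : ∀ n, EMetric.diam (f n) ≤ ENNReal.ofReal ε),
      ∑' n : ℕ, EMetric.diam (f n) ^ α

/-- The Hausdorff dimension of `E` with respect to a family of coverings `Φ`:
`inf {α > 0 : H^α(E, Φ) = 0}` (equal to `∞` if no such `α` exists). -/
def dimFam (Φ : Set (Set ℝ)) (E : Set ℝ) : ℝ≥0∞ :=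
  ⨅ (α : ℝ) (_ : 0 < α) (_ : Hfam Φ α E = 0), ENNReal.ofReal α

end

/-! The rank-`k+1` subcylinders of `Δ^P_{c₁…c_k}` with last digit `d` are the intervals
`(S_k + E/d, S_k + E/(d−1)]` with `E = r_k D_k`, so the union of those with `d > n` is
`(S_k, S_k + E/n]`. With `t = x₂ − x₁ ≤ D_k` and `F = ⌊E/t⌋ ≥ r_k`, the union over `d > F`
covers `U` and has diameter `E/F ≤ 2t`; splitting off its first cylinder, that of digit `F + 1`,
leaves two pieces of diameter at most `E/(F+1) ≤ t`. -/

open Function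

theorem iUnion_Ioc_add_div_natCast {E : ℝ} (hE : 0 < E) (s : ℝ) {n : ℕ} (hn : 0 < n) :
    ⋃ i ∈ {j : ℕ | n + 1 ≤ j}, Ioc (s + E / i) (s + E / ((i : ℝ) - 1)) =
      Ioc s (s + E / n) := by
  have hn : (0 : ℝ) < n := by exact_mod_cast hn
  ext x
  simp only [mem_iUnion, mem_Ioc, mem_ofPred_eq, exists_prop]
  constructor
  · rintro ⟨i, hi, hxi, hxi'⟩
    have hni : (n : ℝ) + 1 ≤ i := by exact_mod_cast hi
    refine ⟨lt_trans (by linarith [div_pos hE (by linarith : (0 : ℝ) < i)]) hxi, hxi'.trans ?_⟩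
    gcongr
    linarith
  · rintro ⟨hsx, hxn⟩
    have hy : 0 < x - s := sub_pos.mpr hsx
    set j := ⌊E / (x - s)⌋₊
    have hj_le : (j : ℝ) * (x - s) ≤ E := (le_div_iff₀ hy).mp (Nat.floor_le (by positivity))
    have hj_lt : E < ((j : ℝ) + 1) * (x - s) := (div_lt_iff₀ hy).mp (Nat.lt_floor_add_one _)
    have hnj : n ≤ j := by
      have hxn' : x - s ≤ E / n := by linarith
      refine Nat.le_floor ((le_div_iff₀ hy).mpr ?_)
      rw [mul_comm]
      exact (le_div_iff₀ hn).mp hxn'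
    have hj0 : (0 : ℝ) < j := hn.trans_le (by exact_mod_cast hnj)
    refine ⟨j + 1, by omega, ?_, ?_⟩
    · have : E / ((j : ℝ) + 1) < x - s := (div_lt_iff₀ (by positivity)).mpr (by linarith)
      push_cast
      linarith
    · push_cast
      rw [add_sub_cancel_right, ← sub_le_iff_le_add', le_div_iff₀ hj0]
      linarith

theorem exists_nat_div_bounds {E t : ℝ} (ht : 0 < t) {r : ℕ} (hr : 0 < r) (hrt : r * t ≤ E) :
    ∃ F : ℕ, r ≤ F ∧ t ≤ E / F ∧ E / F ≤ 2 * t ∧ E / (F + 1) ≤ t ∧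
      E / F - E / (F + 1) ≤ t := by
  have hrF : r ≤ ⌊E / t⌋₊ := Nat.le_floor ((le_div_iff₀ ht).mpr hrt)
  set F := ⌊E / t⌋₊
  have hF1 : (1 : ℝ) ≤ F := by exact_mod_cast hr.trans_le hrF
  have hF : (0 : ℝ) < F := by linarith
  have hE : 0 ≤ E := (mul_nonneg (Nat.cast_nonneg r) ht.le).trans hrt
  have hFt : F * t ≤ E := (le_div_iff₀ ht).mp (Nat.floor_le (div_nonneg hE ht.le))
  have hFt' : E < (F + 1) * t := (div_lt_iff₀ ht).mp (Nat.lt_floor_add_one _)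
  refine ⟨F, hrF, (le_div_iff₀ hF).mpr (by linarith), (div_le_iff₀ hF).mpr (by nlinarith),
    (div_le_iff₀ (by positivity)).mpr (by linarith), ?_⟩
  rw [div_sub_div _ _ hF.ne' (by positivity), div_le_iff₀ (by positivity)]
  nlinarith [mul_le_mul_of_nonneg_right hF1 (mul_pos (by positivity : (0 : ℝ) < F + 1) ht).le]

namespace PerronSystem

variable (P : PerronSystem)

theorem r_update_of_le (c : ℕ → ℕ) {k n : ℕ} (d : ℕ) (hn : n ≤ k) :
    P.r (update c k d) n = P.r c n := by
  have h : (fun j : Fin n => update c k d j) = fun j : Fin n => c j :=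
    funext fun j => update_of_ne (by omega) _ _
  simp only [r, h]

theorem rprod_update_of_le (c : ℕ → ℕ) {k n : ℕ} (d : ℕ) (hn : n ≤ k + 1) :
    P.rprod (update c k d) n = P.rprod c n :=
  Finset.prod_congr rfl fun i hi =>
    by rw [P.r_update_of_le c d (by simp at hi; omega)]

theorem qprod_update_of_le (c : ℕ → ℕ) {k n : ℕ} (d : ℕ) (hn : n ≤ k) :
    qprod (update c k d) n = qprod c n :=
  Finset.prod_congr rfl fun i hi =>
    by rw [update_of_ne (by simp at hi; omega)]

theorem qprod_update_succ (c : ℕ → ℕ) (k d : ℕ) :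
    qprod (update c k d) (k + 1) = qprod c k * (((d : ℝ) - 1) * d) := by
  rw [qprod, Finset.prod_range_succ, ← qprod, qprod_update_of_le c d le_rfl, update_self]

theorem rprod_succ (c : ℕ → ℕ) (k : ℕ) : P.rprod c (k + 1) = P.rprod c k * P.r c k :=
  Finset.prod_range_succ _ _

theorem S_update_succ (c : ℕ → ℕ) (k d : ℕ) :
    P.S (update c k d) (k + 1) = P.S c k + P.D c k * P.r c k / d := by
  rw [S, Finset.sum_range_succ, ← S]
  congr 1
  · refine Finset.sum_congr rfl fun n hn => ?_
    have hn : n < k := Finset.mem_range.mp hn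
    rw [P.rprod_update_of_le c d (by omega), qprod_update_of_le c d hn.le,
      update_of_ne hn.ne]
  · rw [P.rprod_update_of_le c d le_rfl, qprod_update_of_le c d le_rfl, update_self,
      rprod_succ, D]
    ring

theorem D_update_succ (c : ℕ → ℕ) (k d : ℕ) :
    P.D (update c k d) (k + 1) = P.D c k * P.r c k / (((d : ℝ) - 1) * d) := by
  rw [D, P.rprod_update_of_le c d le_rfl, qprod_update_succ, rprod_succ, D,
    ← mul_div_right_comm, div_div]

theorem cyl_update_succ (c : ℕ → ℕ) (k : ℕ) {d : ℕ} (hd : 2 ≤ d) :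
    P.cyl (update c k d) (k + 1) =
      Ioc (P.S c k + P.D c k * P.r c k / d) (P.S c k + P.D c k * P.r c k / ((d : ℝ) - 1)) := by
  have hd : (2 : ℝ) ≤ d := by exact_mod_cast hd
  have hd0 : (d : ℝ) ≠ 0 := by positivity
  have hd1 : (d : ℝ) - 1 ≠ 0 := by linarith
  rw [cyl, S_update_succ, D_update_succ, add_assoc]
  congr 2
  field_simp
  ring

theorem cyl_update_add_one (c : ℕ → ℕ) (k : ℕ) {d : ℕ} (hd : 0 < d) :
    P.cyl (update c k (d + 1)) (k + 1) =
      Ioc (P.S c k + P.D c k * P.r c k / (d + 1)) (P.S c k + P.D c k * P.r c k / d) := by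
  rw [P.cyl_update_succ c k (by omega), Nat.cast_succ, add_sub_cancel_right]

theorem rprod_pos (c : ℕ → ℕ) (n : ℕ) : 0 < P.rprod c n :=
  Finset.prod_pos fun _ _ => by exact_mod_cast P.φ_pos _

theorem qprod_pos {c : ℕ → ℕ} {k : ℕ} (hadm : P.AdmissibleUpTo c k) : 0 < qprod c k := by
  refine Finset.prod_pos fun i hi => ?_
  have h := hadm i (Finset.mem_range.mp hi)
  have hr := P.φ_pos (List.ofFn fun j : Fin i => c j)
  have hc : (2 : ℝ) ≤ c i := by exact_mod_cast (show 2 ≤ c i by unfold r at h; omega)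
  nlinarith

theorem D_pos {c : ℕ → ℕ} {k : ℕ} (hadm : P.AdmissibleUpTo c k) : 0 < P.D c k :=
  div_pos (P.rprod_pos c k) (P.qprod_pos hadm)

theorem iUnion_cyl_update_succ {c : ℕ → ℕ} {k : ℕ} (hadm : P.AdmissibleUpTo c k) {n : ℕ}
    (hn : 0 < n) :
    ⋃ i ∈ {j : ℕ | n + 1 ≤ j}, P.cyl (update c k i) (k + 1) =
      Ioc (P.S c k) (P.S c k + P.D c k * P.r c k / n) := by
  have hE : 0 < P.D c k * P.r c k :=
    mul_pos (P.D_pos hadm) (by exact_mod_cast P.φ_pos _)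
  rw [← iUnion_Ioc_add_div_natCast hE _ hn]
  exact iUnion₂_congr fun i hi => P.cyl_update_succ c k (by simp at hi; omega)

theorem cyl_update_succ_mem_famP {c : ℕ → ℕ} {k : ℕ} (hadm : P.AdmissibleUpTo c k) {n : ℕ}
    (hn : P.r c k + 1 ≤ n) : P.cyl (update c k n) (k + 1) ∈ P.famP :=
  ⟨c, k, n, hadm, hn, Or.inl ⟨n, le_rfl, by simp⟩⟩

theorem iUnion_cyl_update_succ_mem_famP {c : ℕ → ℕ} {k : ℕ} (hadm : P.AdmissibleUpTo c k)
    {n : ℕ} (hn : P.r c k + 1 ≤ n) :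
    ⋃ i ∈ {j : ℕ | n ≤ j}, P.cyl (update c k i) (k + 1) ∈ P.famP :=
  ⟨c, k, n, hadm, hn, Or.inr rfl⟩

end PerronSystem

/-- If `U = (x₁, x₂]` with `x₁ = S_k = inf Δ^P_{c₁…c_k}` and
`x₁ < x₂ ≤ S_k + D_k = sup Δ^P_{c₁…c_k}`, then `U` can be covered by at most two sets from `𝔓`,
each of diameter at most `x₂ − x₁`, and also by a single set from `𝔓` of diameter at most
`2(x₂ − x₁)`. -/
theorem cover_from_inf_of_cylinder (P : PerronSystem) (c : ℕ → ℕ) (k : ℕ)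
    (hadm : P.AdmissibleUpTo c k) (x₂ : ℝ)
    (hlt : P.S c k < x₂) (hle : x₂ ≤ P.S c k + P.D c k) :
    (∃ U₁ U₂ : Set ℝ, U₁ ∈ P.famP ∧ U₂ ∈ P.famP ∧
        Set.Ioc (P.S c k) x₂ ⊆ U₁ ∪ U₂ ∧
        EMetric.diam U₁ ≤ ENNReal.ofReal (x₂ - P.S c k) ∧
        EMetric.diam U₂ ≤ ENNReal.ofReal (x₂ - P.S c k)) ∧
    (∃ U : Set ℝ, U ∈ P.famP ∧ Set.Ioc (P.S c k) x₂ ⊆ U ∧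
        EMetric.diam U ≤ ENNReal.ofReal (2 * (x₂ - P.S c k))) := by
  set S := P.S c k
  set E := P.D c k * P.r c k
  have hr : 0 < P.r c k := P.φ_pos _
  have hE : 0 < E := mul_pos (P.D_pos hadm) (by exact_mod_cast hr)
  obtain ⟨F, hrF, hcover, hdiam₁, hdiam₂, hdiam₃⟩ :=
    exists_nat_div_bounds (E := E) (sub_pos.mpr hlt) hr
      (by rw [mul_comm]; exact mul_le_mul_of_nonneg_right (by linarith) (Nat.cast_nonneg _))
  have hF : 0 < F := hr.trans_le hrF
  have hU₂ := P.iUnion_cyl_update_succ hadm (n := F + 1) (by omega)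
  rw [Nat.cast_succ] at hU₂
  refine ⟨⟨_, _, P.iUnion_cyl_update_succ_mem_famP hadm (n := F + 1 + 1) (by omega),
    P.cyl_update_succ_mem_famP hadm (n := F + 1) (by omega), ?_, ?_, ?_⟩,
    _, P.iUnion_cyl_update_succ_mem_famP hadm (n := F + 1) (by omega), ?_, ?_⟩
  · rw [hU₂, P.cyl_update_add_one c k hF, Ioc_union_Ioc_eq_Ioc
      (le_add_of_nonneg_right (div_pos hE (by positivity)).le)
      (add_le_add_right (div_le_div_of_nonneg_left hE.le (by positivity) (by linarith)) _)]
    exact Ioc_subset_Ioc_right (by linarith)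
  · rw [hU₂]
    exact (Real.ediam_Ioc _ _).trans_le (ENNReal.ofReal_le_ofReal (by linarith))
  · rw [P.cyl_update_add_one c k hF]
    exact (Real.ediam_Ioc _ _).trans_le (ENNReal.ofReal_le_ofReal (by linarith))
  · rw [P.iUnion_cyl_update_succ hadm hF]
    exact Ioc_subset_Ioc_right (by linarith)
  · rw [P.iUnion_cyl_update_succ hadm hF]
    exact (Real.ediam_Ioc _ _).trans_le (ENNReal.ofReal_le_ofReal (by linarith))
end
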